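/- Every regular system of paths is upper convex or lower convex. -/

import Mathlib

noncomputable section

/-- A function `g` changes sign at `t`. -/
def SignChangeAt (g : ℝ → ℝ) (t : ℝ) : Prop :=
  ∃ ε > (0 : ℝ),
    ((∀ s ∈ Set.Ioo (t - ε) t, g s < 0) ∧ (∀ s ∈ Set.Ioo t (t + ε), 0 < g s)) ∨
    ((∀ s ∈ Set.Ioo (t - ε) t, 0 < g s) ∧ (∀ s ∈ Set.Ioo t (t + ε), g s < 0))

/-- A system of at least three paths (graphs of continuous functions on `[0,1]`):
distinct endpoints, finite pairwise intersections, all of which are crossings,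
and no triple intersection points. -/
structure PathSystem (m : ℕ) where
  f : Fin m → ℝ → ℝ
  size_ge : 3 ≤ m
  cont : ∀ i, ContinuousOn (f i) (Set.Icc 0 1)
  endpoints0 : ∀ i j : Fin m, i ≠ j → f i 0 ≠ f j 0
  endpoints1 : ∀ i j : Fin m, i ≠ j → f i 1 ≠ f j 1
  finite_meet : ∀ i j : Fin m, i ≠ j → {t : ℝ | t ∈ Set.Icc (0:ℝ) 1 ∧ f i t = f j t}.Finite
  crossing : ∀ i j : Fin m, i ≠ j → ∀ t ∈ Set.Icc (0:ℝ) 1, f i t = f j t →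
      SignChangeAt (fun s => f i s - f j s) t
  no_triple : ∀ i j k : Fin m, i ≠ j → i ≠ k → j ≠ k → ∀ t ∈ Set.Icc (0:ℝ) 1,
      ¬(f i t = f j t ∧ f i t = f k t)

/-- The set of parameters where paths `i` and `j` of the system meet (= cross). -/
def meetSet {m : ℕ} (S : PathSystem m) (i j : Fin m) : Set ℝ :=
  {t : ℝ | t ∈ Set.Icc (0:ℝ) 1 ∧ S.f i t = S.f j t}

/-- Each pair of paths crosses at least once and at most `k` times. -/
def KCrossing {m : ℕ} (S : PathSystem m) (k : ℕ) : Prop :=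
  ∀ i j : Fin m, i ≠ j → 1 ≤ (meetSet S i j).ncard ∧ (meetSet S i j).ncard ≤ k

/-- Path `i` appears on the upper envelope of the system. -/
def OnUpperEnv {m : ℕ} (S : PathSystem m) (i : Fin m) : Prop :=
  ∃ t ∈ Set.Icc (0:ℝ) 1, ∀ j : Fin m, j ≠ i → S.f j t < S.f i t

/-- Path `i` appears on the lower envelope of the system. -/
def OnLowerEnv {m : ℕ} (S : PathSystem m) (i : Fin m) : Prop :=
  ∃ t ∈ Set.Icc (0:ℝ) 1, ∀ j : Fin m, j ≠ i → S.f i t < S.f j t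

/-- The subsystem of `S` on the index set `s` is upper convex. -/
def UpperConvexOn {m : ℕ} (S : PathSystem m) (s : Finset (Fin m)) : Prop :=
  ∀ i ∈ s, ∃ t ∈ Set.Icc (0:ℝ) 1, ∀ j ∈ s, j ≠ i → S.f j t < S.f i t

/-- The subsystem of `S` on the index set `s` is lower convex. -/
def LowerConvexOn {m : ℕ} (S : PathSystem m) (s : Finset (Fin m)) : Prop :=
  ∀ i ∈ s, ∃ t ∈ Set.Icc (0:ℝ) 1, ∀ j ∈ s, j ≠ i → S.f i t < S.f j t

/-- The three-letter ordered alphabet `x ≺ y ≺ z` used for signatures. -/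
inductive XYZ : Type
  | x | y | z
deriving DecidableEq

/-- The signature of the size-3 subsystem on paths `i, j, k`, where the labels are
ordered by the values at `0` (bottom to top): the word on `{x,y,z}` listing the
crossings from left to right, `x` for an `{i,j}`-crossing, `y` for an `{i,k}`-crossing
and `z` for a `{j,k}`-crossing. -/
noncomputable def signature3 {m : ℕ} (S : PathSystem m) (i j k : Fin m)
    (h1 : S.f i 0 < S.f j 0) (h2 : S.f j 0 < S.f k 0) : List XYZ :=
  (Finset.sort
      (((S.finite_meet i j (by intro h; subst h; exact lt_irrefl _ h1)).toFinset ∪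
        (S.finite_meet i k (by intro h; subst h; exact lt_irrefl _ (h1.trans h2))).toFinset) ∪
        (S.finite_meet j k (by intro h; subst h; exact lt_irrefl _ h2)).toFinset) (· ≤ ·)).map
    (fun t => if S.f i t = S.f j t then XYZ.x else if S.f i t = S.f k t then XYZ.y else XYZ.z)

/-- `σ` is the common (nonempty) signature of all size-3 subsystems of `S`. -/
def RegularSig {m : ℕ} (S : PathSystem m) (σ : List XYZ) : Prop :=
  σ ≠ [] ∧ ∀ (i j k : Fin m) (h1 : S.f i 0 < S.f j 0) (h2 : S.f j 0 < S.f k 0),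
    signature3 S i j k h1 h2 = σ

/-- A regular system: size at least 4, and all size-3 subsystems have the same
nonempty signature. -/
def IsRegularSystem {m : ℕ} (S : PathSystem m) : Prop :=
  4 ≤ m ∧ ∃ σ : List XYZ, RegularSig S σ

/-- A system labeled by `[m]`: indices increase with the order of the left endpoints. -/
structure LabeledPathSystem (m : ℕ) extends PathSystem m where
  mono0 : ∀ i j : Fin m, i < j → f i 0 < f j 0

/-- Signature of the size-3 subsystem on `i < j < k` of a labeled system. -/
noncomputable def lsig {m : ℕ} (S : LabeledPathSystem m) (i j k : Fin m)
    (h1 : i < j) (h2 : j < k) : List XYZ :=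
  signature3 S.toPathSystem i j k (S.mono0 i j h1) (S.mono0 j k h2)

/-- `σ` is the common nonempty signature of all size-3 subsystems of the labeled
system `S`. -/
def SystemSignatureL {m : ℕ} (S : LabeledPathSystem m) (σ : List XYZ) : Prop :=
  σ ≠ [] ∧ ∀ (i j k : Fin m) (h1 : i < j) (h2 : j < k), lsig S i j k h1 h2 = σ

/-- The signature of a labeled system of three paths. -/
noncomputable def sig3 (S : LabeledPathSystem 3) : List XYZ :=
  lsig S 0 1 2 (by decide) (by decide)

/-- The set of parameters where path `i` meets some other path. -/
def crossTimes {m : ℕ} (S : PathSystem m) (i : Fin m) : Set ℝ :=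
  {t : ℝ | t ∈ Set.Icc (0:ℝ) 1 ∧ ∃ j : Fin m, j ≠ i ∧ S.f j t = S.f i t}

lemma crossTimes_finite {m : ℕ} (S : PathSystem m) (i : Fin m) :
    (crossTimes S i).Finite := by
  have hsub : crossTimes S i ⊆
      ⋃ j : Fin m, {t : ℝ | (t ∈ Set.Icc (0:ℝ) 1 ∧ S.f j t = S.f i t) ∧ j ≠ i} := by
    rintro t ⟨ht, j, hj, he⟩
    exact Set.mem_iUnion.2 ⟨j, ⟨ht, he⟩, hj⟩
  refine Set.Finite.subset (Set.finite_iUnion fun j => ?_) hsub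
  by_cases hj : j = i
  · subst hj
    have h0 : {t : ℝ | (t ∈ Set.Icc (0:ℝ) 1 ∧ S.f j t = S.f j t) ∧ j ≠ j} = ∅ := by
      ext t; simp
    rw [h0]; exact Set.finite_empty
  · exact (S.finite_meet j i hj).subset fun t ht => ht.1

/-- The local sequence of path `i`: the labels of the other paths in the order in
which path `i` meets them from left to right. -/
noncomputable def localSeq {m : ℕ} (S : PathSystem m) (i : Fin m) : List (Fin m) :=
  (Finset.sort (crossTimes_finite S i).toFinset (· ≤ ·)).map fun t =>
    if h : ∃ j : Fin m, j ≠ i ∧ S.f j t = S.f i t then h.choose else i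

/-- The tableau associated to a labeled system: row `r` (for `1 ≤ r ≤ m`) is the
local sequence of path `r` written with the (1-based) labels. -/
noncomputable def assocTab {m : ℕ} (S : LabeledPathSystem m) : ℕ → List ℕ :=
  fun r => if h : 1 ≤ r ∧ r ≤ m then
      (localSeq S.toPathSystem ⟨r - 1, by omega⟩).map (fun j => (j : ℕ) + 1)
    else []

/-- A nonempty word on `{x,y,z}` is irreducible if no nonempty proper prefix contains
equally many `x`'s, `y`'s and `z`'s. -/
def IrreducibleXYZ (σ : List XYZ) : Prop :=
  σ ≠ [] ∧ ∀ p : ℕ, 0 < p → p < σ.length →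
    ¬((σ.take p).count XYZ.x = (σ.take p).count XYZ.y ∧
      (σ.take p).count XYZ.y = (σ.take p).count XYZ.z)



/-!
Since paths only meet by crossing, two paths are in the same order at a time `t` as at `0`
exactly when they have crossed an even number of times before `t`. In a regular system with
signature `σ`, for every triple `i₁ < i₂ < i₃` the number of `{i₁, i₃}`-crossings before the first
`{i₁, i₂}`-crossing is the number `α` of `y`s before the first `x` in `σ`; likewise `β` counts the
`x`s before the first `y` and `γ` the `x`s before the first `z`. Comparing the letter counts of
different triples shows that any two paths cross.

So at the first crossing of a path `i` with a path `q`, the parities of `α`, `β`, `γ` say on which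
side of `i` every other path lies. If `α` is even and `β` is even (take `q` the bottom path) or `γ`
is odd (take `q` the path just below `i`), all of them lie above, and right after that crossing `i`
is on the lower envelope. Symmetrically, if `γ` is even and `β` is odd (`q` the top path) or `α` is
odd (`q` the path just above `i`), every path reaches the upper envelope. The remaining case, `α`
and `γ` both odd, is impossible: then the first `{i₁, i₃}`-crossing precedes every `{i₁, i₂}`- and
every `{i₂, i₃}`-crossing, so `i₂` would still lie strictly between `i₁` and `i₃` where these meet.
-/

open Set Filter Topology

lemma Set.Finite.eventually_nhdsLT_forall_lt {B : Set ℝ} (hB : B.Finite) (z : ℝ) :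
    ∀ᶠ s in 𝓝[<] z, ∀ s' ∈ B, s' < z → s' < s :=
  (eventually_all_finite hB).2 fun _ _ =>
    eventually_imp_distrib_left.2 fun hs' => mem_of_superset (Ioo_mem_nhdsLT hs') fun _ h => h.1

lemma Set.Finite.eventually_nhdsGT_forall_gt {B : Set ℝ} (hB : B.Finite) (z : ℝ) :
    ∀ᶠ t in 𝓝[>] z, ∀ s ∈ B, z < s → t < s :=
  (eventually_all_finite hB).2 fun _ _ =>
    eventually_imp_distrib_left.2 fun hs => mem_of_superset (Ioo_mem_nhdsGT hs) fun _ h => h.2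

lemma IsLeast.sep_lt_eq_singleton {α : Type*} [LinearOrder α] {M : Set α} {t₀ t : α}
    (h : IsLeast M t₀) (ht : t₀ < t) (hgap : ∀ s ∈ M, t₀ < s → t < s) :
    {s ∈ M | s < t} = {t₀} := by
  ext s
  refine ⟨fun ⟨hs, hst⟩ => ?_, fun hs => hs ▸ ⟨h.1, ht⟩⟩
  by_contra hne
  exact (hgap s hs ((h.2 hs).lt_of_ne' hne)).not_gt hst

section SignChange

variable {g : ℝ → ℝ}

lemma neg_iff_neg_of_forall_ne_zero {u v : ℝ} (huv : u ≤ v) (hg : ContinuousOn g (Icc u v))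
    (hne : ∀ s ∈ Icc u v, g s ≠ 0) : g u < 0 ↔ g v < 0 := by
  constructor
  · intro hu
    by_contra! hv
    obtain ⟨s, hs, hs0⟩ := intermediate_value_Icc huv hg ⟨hu.le, hv⟩
    exact hne s hs hs0
  · intro hv
    by_contra! hu
    obtain ⟨s, hs, hs0⟩ := intermediate_value_Icc' huv hg ⟨hv.le, hu⟩
    exact hne s hs hs0

lemma SignChangeAt.exists_neg_iff_not_neg {z : ℝ} (h : SignChangeAt g z) :
    ∃ ε > 0, ∀ s ∈ Ioo (z - ε) z, ∀ u ∈ Ioo z (z + ε), (g s < 0 ↔ ¬ g u < 0) := by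
  obtain ⟨ε, hε, ⟨hl, hr⟩ | ⟨hl, hr⟩⟩ := h
  · exact ⟨ε, hε, fun s hs u hu => iff_of_true (hl s hs) (hr u hu).le.not_gt⟩
  · exact ⟨ε, hε, fun s hs u hu => iff_of_false (hl s hs).not_gt (not_not.2 (hr u hu))⟩

lemma SignChangeAt.eventually_neg_iff_not_neg {z t : ℝ} (h : SignChangeAt g z) (hzt : z < t)
    (hg : ContinuousOn g (Icc z t)) (hne : ∀ s ∈ Ioc z t, g s ≠ 0) :
    ∀ᶠ s in 𝓝[<] z, (g s < 0 ↔ ¬ g t < 0) := by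
  obtain ⟨ε, hε, hflip⟩ := h.exists_neg_iff_not_neg
  set u := z + min ε (t - z) / 2
  have hzu : z < u := by have := lt_min hε (sub_pos.2 hzt); simp only [u]; linarith
  have hut : u < t := by have := min_le_right ε (t - z); simp only [u]; linarith
  have huε : u < z + ε := by have := min_le_left ε (t - z); simp only [u]; linarith
  have hut_same : g u < 0 ↔ g t < 0 :=
    neg_iff_neg_of_forall_ne_zero hut.le (hg.mono (Icc_subset_Icc hzu.le le_rfl))
      fun s hs => hne s ⟨hzu.trans_le hs.1, hs.2⟩
  filter_upwards [Ioo_mem_nhdsLT (by linarith : z - ε < z)] with s hs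
  rw [← hut_same]
  exact hflip s hs u ⟨hzu, huε⟩

lemma neg_iff_even_ncard_zeros_lt {a b : ℝ} (hg : ContinuousOn g (Icc a b))
    (hfin : {s ∈ Icc a b | g s = 0}.Finite) (hsign : ∀ s ∈ Icc a b, g s = 0 → SignChangeAt g s)
    (ha : g a < 0) {t : ℝ} (ht : t ∈ Icc a b) (hgt : g t ≠ 0) :
    g t < 0 ↔ Even {s ∈ Icc a b | g s = 0 ∧ s < t}.ncard := by
  induction hn : {s ∈ Icc a b | g s = 0 ∧ s < t}.ncard using Nat.strong_induction_on
    generalizing t with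
  | _ n ih =>
  set B := {s ∈ Icc a b | g s = 0 ∧ s < t}
  have hB : B.Finite := hfin.subset fun s hs => ⟨hs.1, hs.2.1⟩
  have hmono {u : ℝ} (hu : a ≤ u) : ContinuousOn g (Icc u t) :=
    hg.mono (Icc_subset_Icc hu ht.2)
  have hzero_lt {s : ℝ} (hs : s ∈ Icc a t) (h0 : g s = 0) : s ∈ B :=
    ⟨⟨hs.1, hs.2.trans ht.2⟩, h0, hs.2.lt_of_ne fun h => hgt (h ▸ h0)⟩
  rcases B.eq_empty_or_nonempty with hempty | hne
  · subst hn
    rw [hempty, ncard_empty]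
    exact iff_of_true ((neg_iff_neg_of_forall_ne_zero ht.1 (hmono le_rfl)
      fun s hs h0 => (hempty ▸ hzero_lt hs h0 : s ∈ (∅ : Set ℝ))).1 ha) Even.zero
  obtain ⟨z, ⟨hzI, hz0, hzt⟩, hzmax⟩ := exists_max_image B id hB hne
  have haz : a < z := hzI.1.lt_of_ne fun h => by subst h; linarith
  have hflip := (hsign z hzI hz0).eventually_neg_iff_not_neg hzt (hmono hzI.1)
    fun s hs h0 => (hzmax s (hzero_lt ⟨hzI.1.trans hs.1.le, hs.2⟩ h0)).not_gt hs.1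
  obtain ⟨s, ⟨has, hsz⟩, hsB, hs_flip⟩ :=
    ((show ∀ᶠ s in 𝓝[<] z, s ∈ Ioo a z from Ioo_mem_nhdsLT haz).and
      ((hB.eventually_nhdsLT_forall_lt z).and hflip)).exists
  have hB_eq : B = insert z {s' ∈ Icc a b | g s' = 0 ∧ s' < s} := by
    ext s'
    refine ⟨fun h => ?_, ?_⟩
    · rcases (hzmax s' h).lt_or_eq with hlt | rfl
      · exact Or.inr ⟨h.1, h.2.1, hsB s' h hlt⟩
      · exact Or.inl rfl
    · rintro (rfl | ⟨hs'I, hs'0, hs's⟩)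
      · exact ⟨hzI, hz0, hzt⟩
      · exact ⟨hs'I, hs'0, hs's.trans (hsz.trans hzt)⟩
  have hgs : g s ≠ 0 := fun h0 =>
    (hsB s (hzero_lt ⟨has.le, (hsz.trans hzt).le⟩ h0) hsz).false
  have hcard : n = {s' ∈ Icc a b | g s' = 0 ∧ s' < s}.ncard + 1 := by
    rw [← hn, hB_eq, ncard_insert_of_notMem (fun h => h.2.2.not_gt hsz)
      (hfin.subset fun s' hs' => ⟨hs'.1, hs'.2.1⟩)]
  rw [hcard, Nat.even_add_one, ← ih _ (by omega) ⟨has.le, hsz.le.trans hzI.2⟩ hgs rfl, hs_flip,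
    not_not]

end SignChange

section Words

variable {α : Type*} [DecidableEq α]

def countBeforeFirst (l : List α) (v w : α) : ℕ :=
  (l.takeWhile (· != v)).count w

lemma countBeforeFirst_eq_zero_of_ne_zero {l : List α} {v w : α}
    (h : countBeforeFirst l v w ≠ 0) : countBeforeFirst l w v = 0 := by
  induction l with
  | nil => rfl
  | cons a l ih =>
    by_cases hav : a = v
    · simp [countBeforeFirst, hav] at h
    by_cases haw : a = w
    · simp [countBeforeFirst, haw]
    simp_all [countBeforeFirst]

lemma countBeforeFirst_eq_zero_of_ne_zero_of_ne_zero {l : List α} {u v w : α}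
    (h₁ : countBeforeFirst l v u ≠ 0) (h₂ : countBeforeFirst l w v ≠ 0) :
    countBeforeFirst l u w = 0 := by
  induction l with
  | nil => rfl
  | cons a l ih =>
    by_cases hau : a = u
    · simp [countBeforeFirst, hau]
    by_cases hav : a = v
    · simp [countBeforeFirst, hav] at h₁
    by_cases haw : a = w
    · simp [countBeforeFirst, haw] at h₂
    simp_all [countBeforeFirst]

end Words

section SortedCount

variable {α β : Type*} [LinearOrder α] [DecidableEq β]

lemma List.takeWhile_eq_filter_forall_lt {l : List α} (hl : l.Pairwise (· < ·)) (p : α → Prop)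
    [DecidablePred p] :
    l.takeWhile (fun t => !decide (p t)) = l.filter (fun t => ∀ t' ∈ l, p t' → t < t') := by
  induction l with
  | nil => rfl
  | cons a l ih =>
    rw [List.pairwise_cons] at hl
    by_cases ha : p a
    · simp only [List.takeWhile_cons, ha, decide_true, Bool.not_true, Bool.false_eq_true,
        if_false]
      refine (List.filter_eq_nil_iff.2 fun t ht => ?_).symm
      simp only [decide_eq_true_eq, not_forall]
      rcases List.mem_cons.1 ht with rfl | ht
      · exact ⟨t, List.mem_cons_self, ha, lt_irrefl t⟩
      · exact ⟨a, List.mem_cons_self, ha, (hl.1 t ht).not_gt⟩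
    · have hpred : ∀ t ∈ a :: l, p t → a < t := fun t ht hpt =>
        (List.mem_cons.1 ht).elim (fun h => absurd (h ▸ hpt) ha) (hl.1 t)
      rw [List.takeWhile_cons_of_pos (by simpa using ha), ih hl.2,
        List.filter_cons_of_pos (by simpa using hpred)]
      congr 1
      refine List.filter_congr fun t _ => ?_
      simp only [List.forall_mem_cons, ha, false_imp_iff, true_and]

lemma count_map_sort (U : Finset α) (ℓ : α → β) (w : β) :
    ((U.sort (· ≤ ·)).map ℓ).count w = (U.filter fun t => ℓ t = w).card := by
  rw [← Multiset.coe_count, ← Multiset.map_coe, Finset.sort_eq, Multiset.count_map]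
  simp [Finset.card_def, Finset.filter_val, eq_comm]

lemma count_takeWhile_map_sort (U : Finset α) (ℓ : α → β) (v w : β) :
    (((U.sort (· ≤ ·)).map ℓ).takeWhile (· != v)).count w =
      (U.filter (fun t => ℓ t = w ∧ ∀ t' ∈ U, ℓ t' = v → t < t')).card := by
  rw [List.takeWhile_map, show ((· != v) ∘ ℓ) = fun t => !decide (ℓ t = v) from rfl,
    List.takeWhile_eq_filter_forall_lt (Finset.sortedLT_sort U).pairwise,
    ← Multiset.coe_count, ← Multiset.map_coe, ← Multiset.filter_coe, Finset.sort_eq,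
    Multiset.count_map]
  simp [Finset.card_def, Finset.filter_val, Multiset.filter_filter, eq_comm]

end SortedCount

lemma Function.Injective.exists_lt_lt_lt {ι α : Type*} [Fintype ι] [LinearOrder α] {g : ι → α}
    (hg : Function.Injective g) (h : 4 ≤ Fintype.card ι) :
    ∃ a b c d, g a < g b ∧ g b < g c ∧ g c < g d := by
  classical
  set s := Finset.univ.image g
  have hs : s.card = Fintype.card ι := Finset.card_image_of_injective _ hg
  have hpre (k : Fin s.card) : ∃ a, g a = s.orderEmbOfFin rfl k :=
    let ⟨a, _, ha⟩ := Finset.mem_image.1 (s.orderEmbOfFin_mem rfl k)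
    ⟨a, ha⟩
  obtain ⟨a, ha⟩ := hpre ⟨0, by omega⟩
  obtain ⟨b, hb⟩ := hpre ⟨1, by omega⟩
  obtain ⟨c, hc⟩ := hpre ⟨2, by omega⟩
  obtain ⟨d, hd⟩ := hpre ⟨3, by omega⟩
  refine ⟨a, b, c, d, ?_, ?_, ?_⟩ <;>
    simp only [ha, hb, hc, hd, OrderEmbedding.lt_iff_lt, Fin.mk_lt_mk] <;> norm_num

namespace PathSystem

variable {m : ℕ} (S : PathSystem m)

section Crossings

variable {i j : Fin m}

lemma ne_of_lt_at_zero (h : S.f i 0 < S.f j 0) : i ≠ j :=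
  ne_of_apply_ne (S.f · 0) h.ne

lemma meetSet_comm (i j : Fin m) : meetSet S i j = meetSet S j i := by
  ext t
  exact and_congr_right' eq_comm

lemma lt_iff_even_ncard (h0 : S.f i 0 < S.f j 0) {t : ℝ} (ht : t ∈ Icc 0 1)
    (htm : t ∉ meetSet S i j) :
    S.f i t < S.f j t ↔ Even {s ∈ meetSet S i j | s < t}.ncard := by
  have hij := S.ne_of_lt_at_zero h0
  have hzeros : ∀ t, {s ∈ meetSet S i j | s < t} = {s ∈ Icc 0 1 | S.f i s - S.f j s = 0 ∧ s < t} :=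
    fun t => by ext s; simp only [meetSet, mem_ofPred_eq, sub_eq_zero, and_assoc]
  rw [← sub_neg, hzeros]
  refine neg_iff_even_ncard_zeros_lt ((S.cont i).sub (S.cont j)) ?_
    (fun s hs h0 => S.crossing i j hij s hs (sub_eq_zero.1 h0)) (sub_neg.2 h0) ht
    (sub_ne_zero.2 fun h => htm ⟨ht, h⟩)
  simpa only [Pi.sub_apply, sub_eq_zero] using S.finite_meet i j hij

lemma gt_iff_odd_ncard (h0 : S.f i 0 < S.f j 0) {t : ℝ} (ht : t ∈ Icc 0 1)
    (htm : t ∉ meetSet S i j) :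
    S.f j t < S.f i t ↔ Odd {s ∈ meetSet S i j | s < t}.ncard := by
  rw [← Nat.not_even_iff_odd, ← S.lt_iff_even_ncard h0 ht htm, not_lt]
  exact ⟨le_of_lt, fun h => h.lt_of_ne fun h' => htm ⟨ht, h'.symm⟩⟩

lemma lt_of_lt_of_forall_ne {u v : ℝ} (huv : u ≤ v) (hu : 0 ≤ u) (hv : v ≤ 1)
    (h : S.f i u < S.f j u) (hne : ∀ s ∈ Ioc u v, S.f i s ≠ S.f j s) : S.f i v < S.f j v := by
  rw [← sub_neg] at h ⊢
  refine (neg_iff_neg_of_forall_ne_zero huv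
    (((S.cont i).sub (S.cont j)).mono (Icc_subset_Icc hu hv)) fun s hs => ?_).1 h
  rcases hs.1.eq_or_lt with rfl | hus
  · exact h.ne
  · exact sub_ne_zero.2 (hne s ⟨hus, hs.2⟩)

lemma exists_Ioc_forall_ne (hij : i ≠ j) {t₀ : ℝ} (ht₀ : t₀ ∈ meetSet S i j) (k : Fin m) :
    ∃ t ∈ Ioc t₀ 1, ∀ s ∈ Ioc t₀ t, ∀ e ≠ k, S.f e s ≠ S.f k s := by
  have ht₀1 : t₀ < 1 := ht₀.1.2.lt_of_ne fun h => S.endpoints1 i j hij (h ▸ ht₀.2)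
  obtain ⟨t, ⟨ht₀t, ht1⟩, hgap⟩ := ((show ∀ᶠ t in 𝓝[>] t₀, t ∈ Ioo t₀ 1 from
    Ioo_mem_nhdsGT ht₀1).and ((crossTimes_finite S k).eventually_nhdsGT_forall_gt t₀)).exists
  refine ⟨t, ⟨ht₀t, ht1.le⟩, fun s hs e he hes => (hgap s ?_ hs.1).not_ge hs.2⟩
  exact ⟨⟨ht₀.1.1.trans hs.1.le, hs.2.trans ht1.le⟩, e, he, hes⟩

lemma onLowerEnv_of_isLeast_meetSet {q : Fin m} {t₀ : ℝ} (hq : S.f q 0 < S.f i 0)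
    (ht₀ : IsLeast (meetSet S q i) t₀) (h : ∀ e, e ≠ q → e ≠ i → S.f i t₀ < S.f e t₀) :
    OnLowerEnv S i := by
  obtain ⟨t, ⟨ht₀t, ht1⟩, hfree⟩ := S.exists_Ioc_forall_ne (S.ne_of_lt_at_zero hq) ht₀.1 i
  have htI : t ∈ Icc (0 : ℝ) 1 := ⟨ht₀.1.1.1.trans ht₀t.le, ht1⟩
  refine ⟨t, htI, fun e hei => ?_⟩
  by_cases heq : e = q
  · subst heq
    have hfirst := ht₀.sep_lt_eq_singleton ht₀t fun s hs hs₀ =>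
      not_le.1 fun hst => hfree s ⟨hs₀, hst⟩ e hei hs.2
    refine (S.gt_iff_odd_ncard hq htI fun hm => hfree t ⟨ht₀t, le_rfl⟩ e hei hm.2).2 ?_
    rw [hfirst, ncard_singleton]
    exact odd_one
  · exact S.lt_of_lt_of_forall_ne ht₀t.le ht₀.1.1.1 ht1 (h e heq hei)
      fun s hs => (hfree s hs e hei).symm

lemma onUpperEnv_of_isLeast_meetSet {q : Fin m} {t₀ : ℝ} (hq : S.f i 0 < S.f q 0)
    (ht₀ : IsLeast (meetSet S i q) t₀) (h : ∀ e, e ≠ q → e ≠ i → S.f e t₀ < S.f i t₀) :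
    OnUpperEnv S i := by
  obtain ⟨t, ⟨ht₀t, ht1⟩, hfree⟩ := S.exists_Ioc_forall_ne (S.ne_of_lt_at_zero hq) ht₀.1 i
  have htI : t ∈ Icc (0 : ℝ) 1 := ⟨ht₀.1.1.1.trans ht₀t.le, ht1⟩
  refine ⟨t, htI, fun e hei => ?_⟩
  by_cases heq : e = q
  · subst heq
    have hfirst := ht₀.sep_lt_eq_singleton ht₀t fun s hs hs₀ =>
      not_le.1 fun hst => hfree s ⟨hs₀, hst⟩ e hei hs.2.symm
    refine (S.gt_iff_odd_ncard hq htI fun hm => hfree t ⟨ht₀t, le_rfl⟩ e hei hm.2.symm).2 ?_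
    rw [hfirst, ncard_singleton]
    exact odd_one
  · exact S.lt_of_lt_of_forall_ne ht₀t.le ht₀.1.1.1 ht1 (h e heq hei) (hfree · · e hei)

end Crossings

section Triple

variable (a b c : Fin m)

def triplePair : XYZ → Fin m × Fin m
  | .x => (a, b)
  | .y => (a, c)
  | .z => (b, c)

def tripleMeet (v : XYZ) : Set ℝ :=
  meetSet S (triplePair a b c v).1 (triplePair a b c v).2

def tripleLetter (t : ℝ) : XYZ :=
  if S.f a t = S.f b t then .x else if S.f a t = S.f c t then .y else .z

def tripleCrossings (hab : a ≠ b) (hac : a ≠ c) (hbc : b ≠ c) : Finset ℝ :=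
  (S.finite_meet a b hab).toFinset ∪ (S.finite_meet a c hac).toFinset ∪
    (S.finite_meet b c hbc).toFinset

variable {a b c}

lemma signature3_eq {h1 : S.f a 0 < S.f b 0} {h2 : S.f b 0 < S.f c 0} :
    signature3 S a b c h1 h2 =
      ((S.tripleCrossings a b c (S.ne_of_lt_at_zero h1) (S.ne_of_lt_at_zero (h1.trans h2))
        (S.ne_of_lt_at_zero h2)).sort (· ≤ ·)).map (S.tripleLetter a b c) :=
  rfl

lemma mem_tripleCrossings {hab : a ≠ b} {hac : a ≠ c} {hbc : b ≠ c} {t : ℝ} :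
    t ∈ S.tripleCrossings a b c hab hac hbc ↔ ∃ v, t ∈ S.tripleMeet a b c v := by
  simp only [tripleCrossings, Finset.mem_union, Set.Finite.mem_toFinset]
  refine ⟨?_, fun ⟨v, hv⟩ => ?_⟩
  · rintro ((h | h) | h)
    exacts [⟨.x, h⟩, ⟨.y, h⟩, ⟨.z, h⟩]
  · cases v
    exacts [Or.inl (Or.inl hv), Or.inl (Or.inr hv), Or.inr hv]

lemma tripleLetter_eq_of_mem (hab : a ≠ b) (hac : a ≠ c) (hbc : b ≠ c) {v : XYZ} {t : ℝ}
    (ht : t ∈ S.tripleMeet a b c v) : S.tripleLetter a b c t = v := by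
  have hnt := S.no_triple a b c hab hac hbc t ht.1
  obtain ⟨-, ht⟩ := ht
  cases v <;> simp only [triplePair] at ht
  · rw [tripleLetter, if_pos ht]
  · rw [tripleLetter, if_neg fun h => hnt ⟨h, ht⟩, if_pos ht]
  · rw [tripleLetter, if_neg fun h => hnt ⟨h, h.trans ht⟩,
      if_neg fun h => hnt ⟨h.trans ht.symm, h⟩]

lemma tripleLetter_eq_iff (hab : a ≠ b) (hac : a ≠ c) (hbc : b ≠ c) {v w : XYZ} {t : ℝ}
    (ht : t ∈ S.tripleMeet a b c v) : S.tripleLetter a b c t = w ↔ t ∈ S.tripleMeet a b c w :=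
  ⟨fun h => (S.tripleLetter_eq_of_mem hab hac hbc ht).symm.trans h ▸ ht,
    S.tripleLetter_eq_of_mem hab hac hbc⟩

lemma count_signature3 (h1 : S.f a 0 < S.f b 0) (h2 : S.f b 0 < S.f c 0) (w : XYZ) :
    (signature3 S a b c h1 h2).count w = (S.tripleMeet a b c w).ncard := by
  have hab := S.ne_of_lt_at_zero h1
  have hac := S.ne_of_lt_at_zero (h1.trans h2)
  have hbc := S.ne_of_lt_at_zero h2
  rw [signature3_eq, count_map_sort, ← ncard_coe_finset]
  congr 1
  ext t
  simp only [Finset.coe_filter, mem_ofPred_eq, mem_tripleCrossings]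
  exact ⟨fun ⟨⟨v, hv⟩, hw⟩ => (S.tripleLetter_eq_iff hab hac hbc hv).1 hw,
    fun ht => ⟨⟨w, ht⟩, S.tripleLetter_eq_of_mem hab hac hbc ht⟩⟩

lemma countBeforeFirst_signature3 (h1 : S.f a 0 < S.f b 0) (h2 : S.f b 0 < S.f c 0) {v : XYZ}
    {t₀ : ℝ} (ht₀ : IsLeast (S.tripleMeet a b c v) t₀) (w : XYZ) :
    countBeforeFirst (signature3 S a b c h1 h2) v w =
      {s ∈ S.tripleMeet a b c w | s < t₀}.ncard := by
  have hab := S.ne_of_lt_at_zero h1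
  have hac := S.ne_of_lt_at_zero (h1.trans h2)
  have hbc := S.ne_of_lt_at_zero h2
  rw [countBeforeFirst, signature3_eq, count_takeWhile_map_sort, ← ncard_coe_finset]
  congr 1
  ext t
  simp only [Finset.coe_filter, mem_ofPred_eq, mem_tripleCrossings]
  refine ⟨fun ⟨⟨u, hu⟩, hw, hfirst⟩ => ⟨(S.tripleLetter_eq_iff hab hac hbc hu).1 hw, ?_⟩,
    fun ⟨ht, htt₀⟩ => ⟨⟨w, ht⟩, S.tripleLetter_eq_of_mem hab hac hbc ht, ?_⟩⟩
  · exact hfirst t₀ ⟨v, ht₀.1⟩ (S.tripleLetter_eq_of_mem hab hac hbc ht₀.1)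
  · rintro t' ⟨u, hu⟩ hv
    exact htt₀.trans_le (ht₀.2 ((S.tripleLetter_eq_iff hab hac hbc hu).1 hv))

lemma lt_at_zero_triplePair (h1 : S.f a 0 < S.f b 0) (h2 : S.f b 0 < S.f c 0) (w : XYZ) :
    S.f (triplePair a b c w).1 0 < S.f (triplePair a b c w).2 0 := by
  cases w
  exacts [h1, h1.trans h2, h2]

lemma notMem_tripleMeet (h1 : S.f a 0 < S.f b 0) (h2 : S.f b 0 < S.f c 0) {v w : XYZ}
    (hvw : v ≠ w) {t : ℝ} (ht : t ∈ S.tripleMeet a b c v) : t ∉ S.tripleMeet a b c w := by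
  have hab := S.ne_of_lt_at_zero h1
  have hac := S.ne_of_lt_at_zero (h1.trans h2)
  have hbc := S.ne_of_lt_at_zero h2
  exact fun htw => hvw ((S.tripleLetter_eq_of_mem hab hac hbc ht).symm.trans
    (S.tripleLetter_eq_of_mem hab hac hbc htw))

lemma triplePair_lt_iff_even {h1 : S.f a 0 < S.f b 0} {h2 : S.f b 0 < S.f c 0} {σ : List XYZ}
    (hσ : signature3 S a b c h1 h2 = σ) {v w : XYZ} (hvw : v ≠ w) {t₀ : ℝ}
    (ht₀ : IsLeast (S.tripleMeet a b c v) t₀) :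
    S.f (triplePair a b c w).1 t₀ < S.f (triplePair a b c w).2 t₀ ↔
      Even (countBeforeFirst σ v w) := by
  rw [← hσ, S.countBeforeFirst_signature3 h1 h2 ht₀]
  exact S.lt_iff_even_ncard (S.lt_at_zero_triplePair h1 h2 w) ht₀.1.1
    (S.notMem_tripleMeet h1 h2 hvw ht₀.1)

lemma triplePair_gt_iff_odd {h1 : S.f a 0 < S.f b 0} {h2 : S.f b 0 < S.f c 0} {σ : List XYZ}
    (hσ : signature3 S a b c h1 h2 = σ) {v w : XYZ} (hvw : v ≠ w) {t₀ : ℝ}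
    (ht₀ : IsLeast (S.tripleMeet a b c v) t₀) :
    S.f (triplePair a b c w).2 t₀ < S.f (triplePair a b c w).1 t₀ ↔
      Odd (countBeforeFirst σ v w) := by
  rw [← hσ, S.countBeforeFirst_signature3 h1 h2 ht₀]
  exact S.gt_iff_odd_ncard (S.lt_at_zero_triplePair h1 h2 w) ht₀.1.1
    (S.notMem_tripleMeet h1 h2 hvw ht₀.1)

end Triple

section Regular

variable {σ : List XYZ}

lemma injective_eval_zero : Function.Injective (S.f · 0) :=
  fun i j h => by_contra fun hij => S.endpoints0 i j hij h

lemma meetSet_nonempty (hm : 4 ≤ m) (hσ : RegularSig S σ) {i j : Fin m} (hij : i ≠ j) :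
    (meetSet S i j).Nonempty := by
  obtain ⟨a, b, c, d, hab, hbc, hcd⟩ := S.injective_eval_zero.exists_lt_lt_lt (by simpa using hm)
  have hxy : σ.count .x = σ.count .y := calc
    σ.count .x = (meetSet S a c).ncard := by
      rw [← hσ.2 a c d (hab.trans hbc) hcd, count_signature3]; rfl
    _ = σ.count .y := by rw [← hσ.2 a b c hab hbc, count_signature3]; rfl
  have hxz : σ.count .x = σ.count .z := calc
    σ.count .x = (meetSet S b c).ncard := by rw [← hσ.2 b c d hbc hcd, count_signature3]; rfl
    _ = σ.count .z := by rw [← hσ.2 a b c hab hbc, count_signature3]; rfl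
  have hpos : ∀ w, 0 < σ.count w := by
    obtain ⟨u, hu⟩ := List.exists_mem_of_ne_nil σ hσ.1
    have hu := List.count_pos_iff.2 hu
    intro w
    cases u <;> cases w <;> omega
  have hmeet {a b c : Fin m} (h1 : S.f a 0 < S.f b 0) (h2 : S.f b 0 < S.f c 0) (w : XYZ) :
      (S.tripleMeet a b c w).Nonempty :=
    nonempty_of_ncard_ne_zero (by rw [← S.count_signature3 h1 h2, hσ.2]; exact (hpos w).ne')
  wlog hij0 : S.f i 0 < S.f j 0 generalizing i j
  · rw [meetSet_comm]
    exact this hij.symm ((lt_or_gt_of_ne (S.endpoints0 i j hij)).resolve_left hij0)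
  obtain ⟨e, hei, hej⟩ := Fin.exists_ne_and_ne_of_two_lt i j (by omega)
  rcases lt_or_gt_of_ne (S.endpoints0 e i hei) with hei0 | hie0
  · exact hmeet hei0 hij0 .z
  rcases lt_or_gt_of_ne (S.endpoints0 e j hej) with hej0 | hje0
  · exact hmeet hie0 hej0 .y
  · exact hmeet hij0 hje0 .x

lemma exists_isLeast_meetSet (hm : 4 ≤ m) (hσ : RegularSig S σ) {i j : Fin m} (hij : i ≠ j) :
    ∃ t₀, IsLeast (meetSet S i j) t₀ :=
  let ⟨t₀, ht₀, hmin⟩ :=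
    exists_min_image _ id (S.finite_meet i j hij) (S.meetSet_nonempty hm hσ hij)
  ⟨t₀, ht₀, hmin⟩

lemma onLowerEnv_of_isLeast_of_parity (hσ : RegularSig S σ) {q i : Fin m} {t₀ : ℝ}
    (hq : S.f q 0 < S.f i 0) (ht₀ : IsLeast (meetSet S q i) t₀)
    (hlow : ∀ e, S.f e 0 < S.f q 0 → Odd (countBeforeFirst σ .z .x))
    (hmid : ∀ e, S.f q 0 < S.f e 0 → S.f e 0 < S.f i 0 → Even (countBeforeFirst σ .y .x))
    (hhigh : ∀ e, S.f i 0 < S.f e 0 → Even (countBeforeFirst σ .x .y)) :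
    OnLowerEnv S i := by
  refine S.onLowerEnv_of_isLeast_meetSet hq ht₀ fun e heq hei => ?_
  rw [← ht₀.1.2]
  rcases lt_or_gt_of_ne (S.endpoints0 e q heq) with heq0 | hqe0
  · exact (S.triplePair_gt_iff_odd (hσ.2 e q i heq0 hq) (by decide : XYZ.z ≠ .x) ht₀).2
      (hlow e heq0)
  rcases lt_or_gt_of_ne (S.endpoints0 e i hei) with hei0 | hie0
  · exact (S.triplePair_lt_iff_even (hσ.2 q e i hqe0 hei0) (by decide : XYZ.y ≠ .x) ht₀).2
      (hmid e hqe0 hei0)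
  · exact (S.triplePair_lt_iff_even (hσ.2 q i e hq hie0) (by decide : XYZ.x ≠ .y) ht₀).2
      (hhigh e hie0)

lemma onUpperEnv_of_isLeast_of_parity (hσ : RegularSig S σ) {q i : Fin m} {t₀ : ℝ}
    (hq : S.f i 0 < S.f q 0) (ht₀ : IsLeast (meetSet S i q) t₀)
    (hlow : ∀ e, S.f e 0 < S.f i 0 → Even (countBeforeFirst σ .z .x))
    (hmid : ∀ e, S.f i 0 < S.f e 0 → S.f e 0 < S.f q 0 → Odd (countBeforeFirst σ .y .x))
    (hhigh : ∀ e, S.f q 0 < S.f e 0 → Odd (countBeforeFirst σ .x .y)) :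
    OnUpperEnv S i := by
  refine S.onUpperEnv_of_isLeast_meetSet hq ht₀ fun e heq hei => ?_
  rcases lt_or_gt_of_ne (S.endpoints0 e i hei) with hei0 | hie0
  · exact (S.triplePair_lt_iff_even (hσ.2 e i q hei0 hq) (by decide : XYZ.z ≠ .x) ht₀).2
      (hlow e hei0)
  rcases lt_or_gt_of_ne (S.endpoints0 e q heq) with heq0 | hqe0
  · exact (S.triplePair_gt_iff_odd (hσ.2 i e q hie0 heq0) (by decide : XYZ.y ≠ .x) ht₀).2
      (hmid e hie0 heq0)
  · exact (S.triplePair_gt_iff_odd (hσ.2 i q e hq hqe0) (by decide : XYZ.x ≠ .y) ht₀).2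
      (hhigh e hqe0)

lemma onLowerEnv_of_forall_le {i : Fin m} (h : ∀ j, S.f i 0 ≤ S.f j 0) : OnLowerEnv S i :=
  ⟨0, ⟨le_rfl, zero_le_one⟩, fun j hji => (h j).lt_of_ne (S.endpoints0 i j hji.symm)⟩

lemma onUpperEnv_of_forall_le {i : Fin m} (h : ∀ j, S.f j 0 ≤ S.f i 0) : OnUpperEnv S i :=
  ⟨0, ⟨le_rfl, zero_le_one⟩, fun j hji => (h j).lt_of_ne (S.endpoints0 j i hji)⟩

lemma forall_onLowerEnv (hm : 4 ≤ m) (hσ : RegularSig S σ)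
    (hα : Even (countBeforeFirst σ .x .y))
    (hβγ : Even (countBeforeFirst σ .y .x) ∨ Odd (countBeforeFirst σ .z .x)) :
    ∀ i, OnLowerEnv S i := by
  intro i
  by_cases hbot : ∀ j, S.f i 0 ≤ S.f j 0
  · exact S.onLowerEnv_of_forall_le hbot
  have hbelow : {e | S.f e 0 < S.f i 0}.Nonempty := by simpa [Set.Nonempty] using hbot
  have hfin : {e | S.f e 0 < S.f i 0}.Finite := toFinite _
  rcases hβγ with hβ | hγ
  · obtain ⟨q, hq, hqmin⟩ := exists_min_image _ (S.f · 0) hfin hbelow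
    obtain ⟨t₀, ht₀⟩ := S.exists_isLeast_meetSet hm hσ (S.ne_of_lt_at_zero hq)
    exact S.onLowerEnv_of_isLeast_of_parity hσ hq ht₀
      (fun e he => absurd (hqmin e (he.trans hq)) he.not_ge) (fun _ _ _ => hβ) (fun _ _ => hα)
  · obtain ⟨q, hq, hqmax⟩ := exists_max_image _ (S.f · 0) hfin hbelow
    obtain ⟨t₀, ht₀⟩ := S.exists_isLeast_meetSet hm hσ (S.ne_of_lt_at_zero hq)
    exact S.onLowerEnv_of_isLeast_of_parity hσ hq ht₀ (fun _ _ => hγ)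
      (fun e hqe hei => absurd (hqmax e hei) hqe.not_ge) (fun _ _ => hα)

lemma forall_onUpperEnv (hm : 4 ≤ m) (hσ : RegularSig S σ)
    (hγ : Even (countBeforeFirst σ .z .x))
    (hαβ : Odd (countBeforeFirst σ .x .y) ∨ Odd (countBeforeFirst σ .y .x)) :
    ∀ i, OnUpperEnv S i := by
  intro i
  by_cases htop : ∀ j, S.f j 0 ≤ S.f i 0
  · exact S.onUpperEnv_of_forall_le htop
  have habove : {e | S.f i 0 < S.f e 0}.Nonempty := by simpa [Set.Nonempty] using htop
  have hfin : {e | S.f i 0 < S.f e 0}.Finite := toFinite _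
  rcases hαβ with hα | hβ
  · obtain ⟨q, hq, hqmin⟩ := exists_min_image _ (S.f · 0) hfin habove
    obtain ⟨t₀, ht₀⟩ := S.exists_isLeast_meetSet hm hσ (S.ne_of_lt_at_zero hq)
    exact S.onUpperEnv_of_isLeast_of_parity hσ hq ht₀ (fun _ _ => hγ)
      (fun e hie hqe => absurd (hqmin e hie) hqe.not_ge) (fun _ _ => hα)
  · obtain ⟨q, hq, hqmax⟩ := exists_max_image _ (S.f · 0) hfin habove
    obtain ⟨t₀, ht₀⟩ := S.exists_isLeast_meetSet hm hσ (S.ne_of_lt_at_zero hq)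
    exact S.onUpperEnv_of_isLeast_of_parity hσ hq ht₀ (fun _ _ => hγ) (fun _ _ _ => hβ)
      (fun e he => absurd (hqmax e (hq.trans he)) he.not_ge)

lemma not_odd_and_odd (hm : 4 ≤ m) (hσ : RegularSig S σ) :
    ¬(Odd (countBeforeFirst σ .x .y) ∧ Odd (countBeforeFirst σ .z .x)) := by
  rintro ⟨hα, hγ⟩
  obtain ⟨a, b, c, -, hab, hbc, -⟩ := S.injective_eval_zero.exists_lt_lt_lt (by simpa using hm)
  obtain ⟨t₀, ht₀⟩ := S.exists_isLeast_meetSet hm hσ (S.ne_of_lt_at_zero (hab.trans hbc))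
  have hσabc := hσ.2 a b c hab hbc
  have hab_t₀ : S.f a t₀ < S.f b t₀ :=
    (S.triplePair_lt_iff_even hσabc (by decide : XYZ.y ≠ .x) ht₀).2 <| by
      rw [countBeforeFirst_eq_zero_of_ne_zero hα.pos.ne']
      exact Even.zero
  have hbc_t₀ : S.f b t₀ < S.f c t₀ :=
    (S.triplePair_lt_iff_even hσabc (by decide : XYZ.y ≠ .z) ht₀).2 <| by
      rw [countBeforeFirst_eq_zero_of_ne_zero_of_ne_zero hα.pos.ne' hγ.pos.ne']
      exact Even.zero
  linarith [ht₀.1.2]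

end Regular

end PathSystem

/-- **Theorem.** Every regular system of paths is upper convex or lower convex. -/
theorem regular_system_upper_or_lower_convex (m : ℕ) (S : PathSystem m)
    (hreg : IsRegularSystem S) :
    (∀ i : Fin m, OnUpperEnv S i) ∨ (∀ i : Fin m, OnLowerEnv S i) := by
  obtain ⟨hm, σ, hσ⟩ := hreg
  rcases Nat.even_or_odd (countBeforeFirst σ .x .y) with hα | hα <;>
    rcases Nat.even_or_odd (countBeforeFirst σ .z .x) with hγ | hγ
  · rcases Nat.even_or_odd (countBeforeFirst σ .y .x) with hβ | hβ
    · exact Or.inr (S.forall_onLowerEnv hm hσ hα (Or.inl hβ))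
    · exact Or.inl (S.forall_onUpperEnv hm hσ hγ (Or.inr hβ))
  · exact Or.inr (S.forall_onLowerEnv hm hσ hα (Or.inr hγ))
  · exact Or.inl (S.forall_onUpperEnv hm hσ hγ (Or.inl hα))
  · exact (S.not_odd_and_odd hm hσ ⟨hα, hγ⟩).elim

end
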